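/- Let X be a random vector in ℝ^d with characteristic function φ(k) = E[exp(i k·X)] satisfying (1 − φ(k)) / (L(|k|) |k|^α) → 1 as |k| → 0, where 0 < α ≤ 2 and L : (0,∞) → (0,∞) is slowly varying at zero. Then for every μ with 0 < μ < α, E[|X|^μ] < ∞. -/

import Mathlib

open MeasureTheory ProbabilityTheory Filter Real Topology

noncomputable section

/-- Characteristic function with the convention `φ(k) = E[exp(i k·X)]`. -/
def charFn' {d : ℕ} {Ω : Type*} [MeasureSpace Ω]
    (X : Ω → EuclideanSpace ℝ (Fin d)) (k : EuclideanSpace ℝ (Fin d)) : ℂ :=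
  ∫ ω, Complex.exp (Complex.I * ((inner ℝ k (X ω) : ℝ) : ℂ))

/-- `L` is slowly varying at zero: for all `a > 0`, `L(at)/L(t) → 1` as `t → 0⁺`. -/
def SlowlyVaryingAtZero (L : ℝ → ℝ) : Prop :=
  ∀ a : ℝ, 0 < a → Filter.Tendsto (fun t => L (a * t) / L t) (𝓝[>] (0 : ℝ)) (𝓝 1)

/-!
For a real random variable `Y` and `0 ≤ μ`, the dyadic series
`∑ₘ 2^{μm} E[1 - cos (2^{-m} Y)]` controls `E|Y|^μ`: on `{2^{m-1} ≤ |Y| < 2^m}` its `m`-th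
term alone is at least `|Y|^μ / 20`. For `Y = X_j` the `m`-th term is
`2^{μm} Re (1 - φ(2^{-m} e_j)) = O(L(2^{-m}) 2^{-m(α-μ)})`, which is summable by the ratio test
because slow variation gives `L(2^{-m-1}) / L(2^{-m}) → 1`. Since `μ ≤ 2`,
`‖x‖^μ ≤ ∑ⱼ |x_j|^μ` reduces the claim to the coordinates.
-/

open scoped ENNReal NNReal

lemma sq_div_five_le_one_sub_cos {x : ℝ} (hx : |x| ≤ 1) : x ^ 2 / 5 ≤ 1 - cos x := by
  have hπ : π ^ 2 ≤ 10 := by nlinarith [pi_lt_d2, pi_gt_three]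
  have h := cos_le_one_sub_mul_cos_sq (hx.trans (by linarith [pi_gt_three]))
  have : x ^ 2 / 5 ≤ 2 / π ^ 2 * x ^ 2 := by
    rw [div_mul_eq_mul_div, div_le_div_iff₀ (by norm_num) (by positivity)]
    nlinarith [sq_nonneg x]
  linarith

lemma ofReal_abs_rpow_le_one_add_tsum_one_sub_cos {μ : ℝ} (hμ : 0 ≤ μ) (y : ℝ) :
    ENNReal.ofReal (|y| ^ μ) ≤
      1 + 20 * ∑' m : ℕ, ENNReal.ofReal ((1 - cos (2⁻¹ ^ m * y)) / (2⁻¹ ^ m) ^ μ) := by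
  rcases le_or_gt |y| 1 with hy | hy
  · exact (ENNReal.ofReal_le_one.2 (rpow_le_one (abs_nonneg y) hy hμ)).trans le_self_add
  obtain ⟨n, hn, hn'⟩ := exists_nat_pow_near hy.le one_lt_two
  set t : ℝ := 2⁻¹ ^ (n + 1)
  have ht : 0 < t := by positivity
  have hty : 1 / 2 ≤ t * |y| ∧ t * |y| ≤ 1 := by
    have h2 : t * 2 ^ (n + 1) = 1 := by simp [t]
    constructor <;> nlinarith [pow_succ (2 : ℝ) n]
  have hpow : |y| ^ μ ≤ 1 / t ^ μ := by
    rw [le_div_iff₀ (by positivity), ← mul_rpow (abs_nonneg y) ht.le, mul_comm]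
    exact rpow_le_one (by positivity) hty.2 hμ
  have hcos : 1 / 20 ≤ 1 - cos (t * y) := by
    have h := sq_div_five_le_one_sub_cos (x := t * y)
      (by rw [abs_mul, abs_of_pos ht]; exact hty.2)
    have : 1 / 4 ≤ (t * y) ^ 2 := by
      rw [← sq_abs, abs_mul, abs_of_pos ht]; nlinarith [hty.1]
    linarith
  have key : |y| ^ μ ≤ 20 * ((1 - cos (t * y)) / t ^ μ) := by
    calc |y| ^ μ ≤ 1 / t ^ μ := hpow
      _ ≤ 20 * ((1 - cos (t * y)) / t ^ μ) := by
        rw [mul_div_assoc']; gcongr; linarith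
  calc ENNReal.ofReal (|y| ^ μ)
      ≤ 20 * ENNReal.ofReal ((1 - cos (t * y)) / t ^ μ) := by
        rw [← ENNReal.ofReal_ofNat 20, ← ENNReal.ofReal_mul (by norm_num)]
        exact ENNReal.ofReal_le_ofReal key
    _ ≤ 20 * ∑' m : ℕ, ENNReal.ofReal ((1 - cos (2⁻¹ ^ m * y)) / (2⁻¹ ^ m) ^ μ) := by
        gcongr; exact ENNReal.le_tsum (n + 1)
    _ ≤ _ := le_add_self

lemma NNReal.rpow_sum_le_sum_rpow {ι : Type*} (s : Finset ι) (f : ι → ℝ≥0) {p : ℝ}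
    (hp0 : 0 < p) (hp1 : p ≤ 1) : (∑ i ∈ s, f i) ^ p ≤ ∑ i ∈ s, f i ^ p :=
  Finset.le_sum_of_subadditive (· ^ p) (NNReal.zero_rpow hp0.ne').le
    (fun a b => NNReal.rpow_add_le_add_rpow a b hp0.le hp1) s f

lemma EuclideanSpace.nnnorm_rpow_le_sum {𝕜 ι : Type*} [RCLike 𝕜] [Fintype ι] {p : ℝ}
    (hp0 : 0 < p) (hp2 : p ≤ 2) (x : EuclideanSpace 𝕜 ι) : ‖x‖₊ ^ p ≤ ∑ i, ‖x i‖₊ ^ p := by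
  rw [EuclideanSpace.nnnorm_eq, NNReal.sqrt_eq_rpow, ← NNReal.rpow_mul]
  calc (∑ i, ‖x i‖₊ ^ 2) ^ (1 / 2 * p) ≤ ∑ i, (‖x i‖₊ ^ 2) ^ (1 / 2 * p) :=
        NNReal.rpow_sum_le_sum_rpow _ _ (by positivity) (by linarith)
    _ = ∑ i, ‖x i‖₊ ^ p := by
        congr! 1 with i
        rw [← NNReal.rpow_natCast, ← NNReal.rpow_mul]; congr 1; ring

lemma lintegral_nnnorm_rpow_lt_top_of_summable {Ω : Type*} [MeasurableSpace Ω] {P : Measure Ω}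
    [IsFiniteMeasure P] {Y : Ω → ℝ} (hY : Measurable Y) {μ : ℝ} (hμ : 0 ≤ μ)
    (h : Summable fun m : ℕ => (∫ ω, 1 - cos (2⁻¹ ^ m * Y ω) ∂P) / (2⁻¹ ^ m) ^ μ) :
    ∫⁻ ω, (‖Y ω‖₊ : ℝ≥0∞) ^ μ ∂P < ⊤ := by
  set g : ℕ → Ω → ℝ := fun m ω => (1 - cos (2⁻¹ ^ m * Y ω)) / (2⁻¹ ^ m) ^ μ
  have hg_meas : ∀ m, Measurable (g m) := fun m => by fun_prop
  have hg_nonneg : ∀ m ω, 0 ≤ g m ω := fun m ω =>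
    div_nonneg (sub_nonneg.2 (cos_le_one _)) (by positivity)
  have hg_int : ∀ m, Integrable (g m) P := fun m =>
    ((integrable_const 1).sub (Integrable.of_bound (by fun_prop) 1
      (ae_of_all _ fun ω => abs_cos_le_one _))).div_const _
  have hg_lint : ∀ m, ∫⁻ ω, ENNReal.ofReal (g m ω) ∂P = ENNReal.ofReal (∫ ω, g m ω ∂P) :=
    fun m => (ofReal_integral_eq_lintegral_ofReal (hg_int m) (ae_of_all _ (hg_nonneg m))).symm
  calc ∫⁻ ω, (‖Y ω‖₊ : ℝ≥0∞) ^ μ ∂P = ∫⁻ ω, ENNReal.ofReal (|Y ω| ^ μ) ∂P := by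
        simp_rw [← ENNReal.ofReal_rpow_of_nonneg (abs_nonneg _) hμ, ← Real.enorm_eq_ofReal_abs,
          enorm_eq_nnnorm]
    _ ≤ ∫⁻ ω, 1 + 20 * ∑' m, ENNReal.ofReal (g m ω) ∂P :=
        lintegral_mono fun ω => ofReal_abs_rpow_le_one_add_tsum_one_sub_cos hμ (Y ω)
    _ = P Set.univ + 20 * ENNReal.ofReal (∑' m, ∫ ω, g m ω ∂P) := by
        rw [lintegral_add_left measurable_const, lintegral_const, one_mul,
          lintegral_const_mul _ (Measurable.tsum fun m => (hg_meas m).ennreal_ofReal),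
          lintegral_tsum fun m => (hg_meas m).ennreal_ofReal.aemeasurable]
        simp_rw [hg_lint]
        rw [ENNReal.ofReal_tsum_of_nonneg (fun m => integral_nonneg (hg_nonneg m))]
        simpa only [g, integral_div] using h
    _ < ⊤ := by simp [ENNReal.mul_lt_top]

lemma re_one_sub_charFn' {Ω : Type*} [MeasureSpace Ω] [IsProbabilityMeasure (ℙ : Measure Ω)]
    {d : ℕ} {X : Ω → EuclideanSpace ℝ (Fin d)} (hX : Measurable X) (k : EuclideanSpace ℝ (Fin d)) :
    (1 - charFn' X k).re = ∫ ω, 1 - cos (inner ℝ k (X ω)) := by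
  have hint : Integrable (fun ω => Complex.exp (Complex.I * ((inner ℝ k (X ω) : ℝ) : ℂ))) ℙ :=
    Integrable.of_bound (by fun_prop) 1 (ae_of_all _ fun ω => by
      rw [mul_comm, Complex.norm_exp_ofReal_mul_I])
  rw [Complex.sub_re, Complex.one_re, charFn', ← RCLike.re_to_complex, ← integral_re hint,
    integral_sub (integrable_const 1) (Integrable.of_bound (by fun_prop) 1
      (ae_of_all _ fun ω => abs_cos_le_one _))]
  simp [mul_comm Complex.I, Complex.exp_ofReal_mul_I_re]

lemma tendsto_pow_nhdsGT_zero {r : ℝ} (hr0 : 0 < r) (hr1 : r < 1) :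
    Tendsto (fun m : ℕ => r ^ m) atTop (𝓝[>] 0) :=
  tendsto_nhdsWithin_iff.2 ⟨tendsto_pow_atTop_nhds_zero_of_lt_one hr0.le hr1,
    .of_forall fun m => pow_pos hr0 m⟩

lemma SlowlyVaryingAtZero.summable_mul_rpow {L : ℝ → ℝ} (hL : SlowlyVaryingAtZero L)
    (hLpos : ∀ t : ℝ, 0 < t → 0 < L t) {r : ℝ} (hr0 : 0 < r) (hr1 : r < 1) {β : ℝ}
    (hβ : 0 < β) : Summable fun m : ℕ => L (r ^ m) * (r ^ m) ^ β := by
  have hpos : ∀ m : ℕ, 0 < L (r ^ m) * (r ^ m) ^ β := fun m =>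
    mul_pos (hLpos _ (pow_pos hr0 m)) (by positivity)
  refine summable_of_ratio_test_tendsto_lt_one (rpow_lt_one hr0.le hr1 hβ)
    (.of_forall fun m => (hpos m).ne') ?_
  have hratio : ∀ m : ℕ, ‖L (r ^ (m + 1)) * (r ^ (m + 1)) ^ β‖ / ‖L (r ^ m) * (r ^ m) ^ β‖
      = L (r * r ^ m) / L (r ^ m) * r ^ β := by
    intro m
    rw [Real.norm_of_nonneg (hpos _).le, Real.norm_of_nonneg (hpos _).le, pow_succ',
      mul_rpow hr0.le (by positivity)]
    field_simp [(hpos m).ne', (hLpos _ (pow_pos hr0 m)).ne']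
  simp_rw [hratio]
  simpa using ((hL r hr0).comp (tendsto_pow_nhdsGT_zero hr0 hr1)).mul_const (r ^ β)

lemma isBigO_of_tendsto_div_one {α : Type*} {l : Filter α} {f : α → ℂ} {g : α → ℝ}
    (h : Tendsto (fun x => f x / (g x : ℂ)) l (𝓝 1)) : f =O[l] g := by
  refine Complex.isBigO_ofReal_right.1 (Asymptotics.isBigO_of_div_tendsto_nhds ?_ 1 h)
  filter_upwards [h.eventually_ne one_ne_zero] with x hx hg
  simp [hg] at hx

lemma summable_one_sub_charFn'_div_rpow {Ω : Type*} [MeasureSpace Ω] {d : ℕ}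
    {X : Ω → EuclideanSpace ℝ (Fin d)} {L : ℝ → ℝ} (hLpos : ∀ t : ℝ, 0 < t → 0 < L t)
    (hL : SlowlyVaryingAtZero L) {α μ : ℝ} (hμα : μ < α)
    (hphi : Tendsto (fun k : EuclideanSpace ℝ (Fin d) =>
        (1 - charFn' X k) / ((L ‖k‖ * ‖k‖ ^ α : ℝ) : ℂ))
      (𝓝[≠] (0 : EuclideanSpace ℝ (Fin d))) (𝓝 1))
    {v : EuclideanSpace ℝ (Fin d)} (hv : ‖v‖ = 1) :
    Summable fun m : ℕ => (1 - charFn' X ((2⁻¹ : ℝ) ^ m • v)) / (((2⁻¹ : ℝ) ^ m) ^ μ : ℝ) := by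
  have hsmul : Tendsto (fun m : ℕ => (2⁻¹ : ℝ) ^ m • v) atTop (𝓝[≠] 0) :=
    tendsto_nhdsWithin_iff.2 ⟨by simpa using (tendsto_pow_atTop_nhds_zero_of_lt_one
      (by norm_num : (0 : ℝ) ≤ 2⁻¹) (by norm_num)).smul_const v,
      .of_forall fun m => smul_ne_zero (by positivity) (norm_ne_zero_iff.1 (by simp [hv]))⟩
  have hO := ((isBigO_of_tendsto_div_one hphi).comp_tendsto hsmul).mul
    (Asymptotics.isBigO_of_le atTop (f := fun m : ℕ => ((((2⁻¹ : ℝ) ^ m) ^ μ : ℝ) : ℂ)⁻¹)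
      (g := fun m : ℕ => (((2⁻¹ : ℝ) ^ m) ^ μ)⁻¹) fun m => by simp)
  refine summable_of_isBigO_nat
    (hL.summable_mul_rpow hLpos (r := 2⁻¹) (by norm_num) (by norm_num) (sub_pos.2 hμα))
    (hO.congr (fun m => by simp [div_eq_mul_inv]) fun m => ?_)
  have ht : 0 < (2⁻¹ : ℝ) ^ m := by positivity
  simp only [Function.comp_apply, norm_smul, hv, mul_one, Real.norm_of_nonneg ht.le,
    rpow_sub ht, div_eq_mul_inv, mul_assoc]

theorem statement19
    {Ω : Type*} [MeasureSpace Ω] [IsProbabilityMeasure (ℙ : Measure Ω)]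
    (d : ℕ) (X : Ω → EuclideanSpace ℝ (Fin d)) (hmeas : Measurable X)
    (α : ℝ) (hα : α ∈ Set.Ioc (0 : ℝ) 2)
    (L : ℝ → ℝ) (hLpos : ∀ t : ℝ, 0 < t → 0 < L t)
    (hL : SlowlyVaryingAtZero L)
    (hphi : Tendsto
      (fun k : EuclideanSpace ℝ (Fin d) =>
        (1 - charFn' X k) / ((L ‖k‖ * ‖k‖ ^ α : ℝ) : ℂ))
      (𝓝[≠] (0 : EuclideanSpace ℝ (Fin d))) (𝓝 1)) :
    ∀ μ : ℝ, 0 < μ → μ < α → ∫⁻ ω, (‖X ω‖₊ : ENNReal) ^ μ ∂ℙ < ⊤ := by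
  intro μ hμ hμα
  have hcoord : ∀ j, Measurable fun ω => X ω j := fun j => by fun_prop
  calc ∫⁻ ω, (‖X ω‖₊ : ℝ≥0∞) ^ μ ∂ℙ ≤ ∫⁻ ω, ∑ j, (‖X ω j‖₊ : ℝ≥0∞) ^ μ ∂ℙ :=
        lintegral_mono fun ω => by
          simp_rw [← ENNReal.coe_rpow_of_nonneg _ hμ.le, ← ENNReal.ofNNReal_finsetSum]
          exact ENNReal.coe_le_coe.2 (EuclideanSpace.nnnorm_rpow_le_sum hμ (hμα.le.trans hα.2) _)
    _ = ∑ j, ∫⁻ ω, (‖X ω j‖₊ : ℝ≥0∞) ^ μ ∂ℙ :=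
        lintegral_finsetSum _ fun j _ => by fun_prop
    _ < ⊤ := ENNReal.sum_lt_top.2 fun j _ => by
        refine lintegral_nnnorm_rpow_lt_top_of_summable (hcoord j) hμ.le ?_
        have h := Complex.reCLM.summable (summable_one_sub_charFn'_div_rpow hLpos hL hμα hphi
          (by simp : ‖EuclideanSpace.single j (1 : ℝ)‖ = 1))
        refine h.congr fun m => ?_
        simp [Complex.div_ofReal_re, re_one_sub_charFn' hmeas, real_inner_smul_left,
          EuclideanSpace.inner_single_left]
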